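/- arXiv:2311.07436 — 2 statements merged into one kernel-verified Lean document; each statement's English description precedes it below -/
import Mathlib

section
/- Suppose σ is a compactly supported Borel probability measure on ℝ^d, T is nonzero, and 1 < p < q < ∞ is a valid pair for the convolution operator T. Then there is a function η ↦ δ(η) with δ(η) → 0 as η → 0⁺ such that for all sufficiently small η > 0 there exists R > 0 such that: for every f ∈ L^p(ℝ^d) with ‖Tf‖_q > (1−η)‖T‖_{p,q}‖f‖_p, there exists x₀ ∈ ℝ^d with ‖f · 1_{ℝ^d \ B(x₀, R)}‖_p ≤ δ(η) ‖f‖_p. -/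
open MeasureTheory Metric Filter
open scoped ENNReal Topology

noncomputable section

/-- Euclidean space `ℝ^d`. -/
abbrev Euc (d : ℕ) := EuclideanSpace ℝ (Fin d)

/-- The convolution operator `T f x = ∫ f (x - y) dσ(y)`. -/
def convOp {d : ℕ} {F : Type*} [NormedAddCommGroup F] [NormedSpace ℝ F]
    (σ : Measure (Euc d)) (f : Euc d → F) (x : Euc d) : F :=
  ∫ y, f (x - y) ∂σ

/-- The adjoint operator `T* g x = ∫ g (x + y) dσ(y)`. -/
def adjOp {d : ℕ} {F : Type*} [NormedAddCommGroup F] [NormedSpace ℝ F]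
    (σ : Measure (Euc d)) (g : Euc d → F) (x : Euc d) : F :=
  ∫ y, g (x + y) ∂σ

/-- The operator norm of an operator `T` acting on functions, from `L^p` to `L^q`,
as an extended nonnegative real. -/
def opNorm {d : ℕ} {F G : Type*} [NormedAddCommGroup F] [NormedAddCommGroup G]
    (T : (Euc d → F) → Euc d → G) (p q : ℝ≥0∞) : ℝ≥0∞ :=
  ⨆ (f : Euc d → F) (_ : MemLp f p volume) (_ : eLpNorm f p volume ≠ 0),
    eLpNorm (T f) q volume / eLpNorm f p volume

/-- The Fourier decay hypothesis: `|σ̂(ξ)| ≤ C (1+|ξ|)^{-α}` for some `C < ∞`, `α > 0`,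
where `σ̂(ξ) = ∫ e^{-2πi x·ξ} dσ(x)`. -/
def FourierDecay {d : ℕ} (σ : Measure (Euc d)) : Prop :=
  ∃ C : ℝ, ∃ α : ℝ, 0 < α ∧ ∀ ξ : Euc d,
    ‖∫ x, Complex.exp (-(2 * Real.pi * (inner ℝ x ξ : ℝ)) * Complex.I) ∂σ‖
      ≤ C * (1 + ‖ξ‖) ^ (-α)

/-- `(1/p, 1/q)` lies in the interior, relative to `[0,1]²`, of the set
`R(T) = {(1/r,1/s) ∈ [0,1]² : ‖T‖_{r,s} < ∞}` (reciprocal `u = 0` corresponds to the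
exponent `∞` via `(ENNReal.ofReal u)⁻¹`). -/
def NonEndpoint {d : ℕ} (σ : Measure (Euc d)) (p q : ℝ) : Prop :=
  ∃ ε > 0, ∀ u v : ℝ, u ∈ Set.Icc (0:ℝ) 1 → v ∈ Set.Icc (0:ℝ) 1 →
    |u - 1/p| < ε → |v - 1/q| < ε →
      opNorm (convOp (F := ℂ) σ) (ENNReal.ofReal u)⁻¹ (ENNReal.ofReal v)⁻¹ < ⊤

/-!
Let `supp σ ⊆ closedBall 0 ρ` and `A = ‖T‖_{p,q}`. Tile `ℝ^d` by cubes `Q_k` of side `2ρ`; the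
value `Tf(x)` only involves the at most `2^d` cubes meeting `closedBall x ρ`, whence
`‖Tf‖_q^q ≤ 2^{d(q-1)} A^q (sup_k ∫_{Q_k} |f|^p)^{q/p-1} ‖f‖_p^p`. As `q > p`, a near-extremizer
must therefore put a fraction `m` of its mass on a single cube, hence on a ball `B(x₀, R₁)`, as soon
as `2^{d(q-1)} m^{q/p-1} < (1-η)^q`.

Among `N ≥ η^{-p}` consecutive shells of width `2ρ` around that ball, one carries mass at most
`η^p ‖f‖_p^p`. Split `f = g + e + h` into the parts inside, on and outside that shell. Then `Tg`
and `Th` have disjoint supports, so `‖Tg + Th‖_q^q ≤ A^q (‖g‖_p^q + ‖h‖_p^q)`; if `h` also kept a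
fraction `m` of the mass, this would be at most `((1-m)^θ A ‖f‖_p)^q` with `θ = 1/p - 1/q`.
Together with `‖Te‖_q ≤ η A ‖f‖_p` this contradicts near-extremality once `(1-m)^θ = 1 - 2η`.
-/

namespace ENNReal

theorem rpow_eq_rpow_sub_one_mul (a : ℝ≥0∞) {t : ℝ} (ht : 1 ≤ t) :
    a ^ t = a ^ (t - 1) * a := by
  conv_lhs => rw [← sub_add_cancel t 1]
  rw [rpow_add_of_nonneg _ _ (by linarith) zero_le_one, rpow_one]

theorem rpow_le_rpow_sub_one_mul {a M : ℝ≥0∞} (h : a ≤ M) {t : ℝ} (ht : 1 ≤ t) :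
    a ^ t ≤ M ^ (t - 1) * a := by
  rw [rpow_eq_rpow_sub_one_mul a ht]
  gcongr

theorem tsum_rpow_le_iSup_rpow_mul_tsum {ι : Type*} (a : ι → ℝ≥0∞) {t : ℝ} (ht : 1 ≤ t) :
    ∑' k, a k ^ t ≤ (⨆ k, a k) ^ (t - 1) * ∑' k, a k := by
  rw [← ENNReal.tsum_mul_left]
  exact ENNReal.tsum_le_tsum fun k => rpow_le_rpow_sub_one_mul (le_iSup a k) ht

theorem rpow_add_rpow_le_of_le_add {G H I : ℝ≥0∞} (hI : I ≠ ⊤) (hGH : G + H ≤ I) {m : ℝ}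
    (hG : ENNReal.ofReal m * I ≤ G) (hH : ENNReal.ofReal m * I ≤ H) {t : ℝ} (ht : 1 ≤ t) :
    G ^ t + H ^ t ≤ (ENNReal.ofReal (1 - m) * I) ^ (t - 1) * I := by
  have hmI : ENNReal.ofReal m * I ≠ ⊤ := mul_ne_top ofReal_ne_top hI
  have hsplit : I ≤ ENNReal.ofReal (1 - m) * I + ENNReal.ofReal m * I := by
    calc I = ENNReal.ofReal (1 - m + m) * I := by simp
      _ ≤ _ := by rw [← add_mul]; gcongr; exact ofReal_add_le
  have hle : ∀ X Y, X + Y ≤ I → ENNReal.ofReal m * I ≤ Y → X ≤ ENNReal.ofReal (1 - m) * I :=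
    fun X Y hXY hY => (le_sub_of_add_le_right hmI ((add_le_add le_rfl hY).trans hXY)).trans
      (tsub_le_iff_right.2 hsplit)
  calc G ^ t + H ^ t
      ≤ (ENNReal.ofReal (1 - m) * I) ^ (t - 1) * G
          + (ENNReal.ofReal (1 - m) * I) ^ (t - 1) * H :=
        add_le_add (rpow_le_rpow_sub_one_mul (hle G H hGH hH) ht)
          (rpow_le_rpow_sub_one_mul (hle H G (by rwa [add_comm]) hG) ht)
    _ ≤ (ENNReal.ofReal (1 - m) * I) ^ (t - 1) * I := by rw [← mul_add]; gcongr

theorem rpow_add_rpow_rpow_le_of_le_add {G H I : ℝ≥0∞} (hI : I ≠ ⊤) (hGH : G + H ≤ I) {m : ℝ}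
    (hG : ENNReal.ofReal m * I ≤ G) (hH : ENNReal.ofReal m * I ≤ H) {p q : ℝ} (hp : 0 < p)
    (hpq : p ≤ q) :
    (G ^ (q / p) + H ^ (q / p)) ^ (1 / q)
      ≤ ENNReal.ofReal (1 - m) ^ (1 / p - 1 / q) * I ^ (1 / p) := by
  have ht : 1 ≤ q / p := (one_le_div hp).2 hpq
  have hq : 0 < q := hp.trans_le hpq
  calc _ ≤ ((ENNReal.ofReal (1 - m) * I) ^ (q / p - 1) * I) ^ (1 / q) := by
        gcongr
        exact rpow_add_rpow_le_of_le_add hI hGH hG hH ht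
    _ = _ := by
        rw [mul_rpow_of_nonneg _ I (by linarith : 0 ≤ q / p - 1), mul_assoc,
          ← rpow_eq_rpow_sub_one_mul I ht, mul_rpow_of_nonneg _ _ (by positivity), ← rpow_mul,
          ← rpow_mul]
        congr 2 <;> field_simp

theorem rpow_one_div_le_of_mul_le {a b n x : ℝ≥0∞} {p : ℝ} (hp : 0 < p) (hn : 1 ≤ x ^ p * n)
    (h : n * a ≤ b) : a ^ (1 / p) ≤ x * b ^ (1 / p) := by
  calc a ^ (1 / p) ≤ (x ^ p * b) ^ (1 / p) := by
        gcongr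
        calc a ≤ x ^ p * n * a := le_mul_of_one_le_left' hn
          _ ≤ x ^ p * b := by rw [mul_assoc]; gcongr
    _ = x * b ^ (1 / p) := by
        rw [mul_rpow_of_nonneg _ _ (by positivity), ← rpow_mul, mul_one_div_cancel hp.ne',
          rpow_one]

end ENNReal

namespace MeasureTheory

section LpMass

variable {α : Type*} [MeasurableSpace α] (μ : Measure α)

theorem eLpNorm_ofReal_rpow {ε : Type*} [ENorm ε] {q : ℝ} (hq : 0 < q) (f : α → ε) :
    eLpNorm f (ENNReal.ofReal q) μ ^ q = ∫⁻ x, ‖f x‖ₑ ^ q ∂μ := by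
  rw [eLpNorm_eq_lintegral_rpow_enorm_toReal (by simpa using hq) ENNReal.ofReal_ne_top,
    ENNReal.toReal_ofReal hq.le, ← ENNReal.rpow_mul, one_div_mul_cancel hq.ne',
    ENNReal.rpow_one]

theorem eLpNorm_ofReal_eq {ε : Type*} [ENorm ε] {q : ℝ} (hq : 0 < q) (f : α → ε) :
    eLpNorm f (ENNReal.ofReal q) μ = (∫⁻ x, ‖f x‖ₑ ^ q ∂μ) ^ (1 / q) := by
  rw [← eLpNorm_ofReal_rpow μ hq, ← ENNReal.rpow_mul, mul_one_div_cancel hq.ne',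
    ENNReal.rpow_one]

def lpMass {ε : Type*} [ENorm ε] (p : ℝ) (f : α → ε) : Measure α :=
  μ.withDensity fun x => ‖f x‖ₑ ^ p

variable {F : Type*} [NormedAddCommGroup F]

theorem eLpNorm_indicator_eq_lpMass {p : ℝ} (hp : 0 < p) (f : α → F) {s : Set α}
    (hs : MeasurableSet s) :
    eLpNorm (s.indicator f) (ENNReal.ofReal p) μ = lpMass μ p f s ^ (1 / p) := by
  rw [eLpNorm_indicator_eq_eLpNorm_restrict hs, eLpNorm_ofReal_eq _ hp, lpMass,
    withDensity_apply _ hs]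

theorem eLpNorm_eq_lpMass_univ {p : ℝ} (hp : 0 < p) (f : α → F) :
    eLpNorm f (ENNReal.ofReal p) μ = lpMass μ p f Set.univ ^ (1 / p) := by
  simpa using eLpNorm_indicator_eq_lpMass μ hp f MeasurableSet.univ

theorem lpMass_univ_ne_top {p : ℝ} (hp : 0 < p) {f : α → F}
    (hf : MemLp f (ENNReal.ofReal p) μ) : lpMass μ p f Set.univ ≠ ⊤ := by
  have hfin := hf.2
  rw [eLpNorm_eq_lpMass_univ μ hp] at hfin
  exact ((ENNReal.rpow_lt_top_iff_of_pos (by positivity)).1 hfin).ne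

theorem eLpNorm_indicator_le_of_lpMass_le {p : ℝ} (hp : 0 < p) {f : α → F} {s : Set α}
    (hs : MeasurableSet s) {m : ℝ} (hm : 0 ≤ m)
    (h : lpMass μ p f s ≤ ENNReal.ofReal m * lpMass μ p f Set.univ) :
    eLpNorm (s.indicator f) (ENNReal.ofReal p) μ
      ≤ ENNReal.ofReal (m ^ (1 / p)) * eLpNorm f (ENNReal.ofReal p) μ := by
  rw [eLpNorm_indicator_eq_lpMass μ hp f hs, eLpNorm_eq_lpMass_univ μ hp,
    ← ENNReal.ofReal_rpow_of_nonneg hm (by positivity),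
    ← ENNReal.mul_rpow_of_nonneg _ _ (by positivity)]
  gcongr

end LpMass

theorem exists_card_mul_measure_le {α ι : Type*} [MeasurableSpace α] (μ : Measure α)
    {s : Finset ι} (hs : s.Nonempty) {t : ι → Set α} (hdisj : (s : Set ι).PairwiseDisjoint t)
    (ht : ∀ i ∈ s, MeasurableSet (t i)) : ∃ i ∈ s, (s.card : ℝ≥0∞) * μ (t i) ≤ μ Set.univ := by
  obtain ⟨i, hi, hmin⟩ := s.exists_min_image (fun j => μ (t j)) hs
  refine ⟨i, hi, ?_⟩
  calc (s.card : ℝ≥0∞) * μ (t i) = s.card • μ (t i) := (nsmul_eq_mul _ _).symm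
    _ ≤ ∑ j ∈ s, μ (t j) := Finset.card_nsmul_le_sum _ _ _ hmin
    _ = μ (⋃ j ∈ s, t j) := (measure_biUnion_finset hdisj ht).symm
    _ ≤ μ Set.univ := measure_mono (Set.subset_univ _)

theorem lintegral_add_rpow_of_disjoint {α : Type*} [MeasurableSpace α] {μ : Measure α}
    {φ ψ : α → ℝ≥0∞} (hφ : AEMeasurable φ μ) (hdisj : ∀ x, φ x = 0 ∨ ψ x = 0) {q : ℝ}
    (hq : 0 < q) : ∫⁻ x, (φ x + ψ x) ^ q ∂μ = ∫⁻ x, φ x ^ q ∂μ + ∫⁻ x, ψ x ^ q ∂μ := by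
  have hpointwise : ∀ x, (φ x + ψ x) ^ q = φ x ^ q + ψ x ^ q := fun x => by
    rcases hdisj x with h | h <;> simp [h, ENNReal.zero_rpow_of_pos hq]
  rw [lintegral_congr hpointwise, lintegral_add_left' (hφ.pow_const q)]

theorem exists_pos_measure_compl_closedBall_eq_zero {E : Type*} [PseudoMetricSpace E]
    [MeasurableSpace E] {σ : Measure E} (h : ∃ K : Set E, IsCompact K ∧ σ Kᶜ = 0) (x : E) :
    ∃ ρ > 0, σ (closedBall x ρ)ᶜ = 0 := by
  obtain ⟨K, hK, hK0⟩ := h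
  obtain ⟨r, hr⟩ := hK.isBounded.subset_closedBall x
  exact ⟨max r 1, by positivity, measure_mono_null (Set.compl_subset_compl.2
    (hr.trans (closedBall_subset_closedBall (le_max_left _ _)))) hK0⟩

end MeasureTheory

namespace SpatialLocalization

section Annulus

variable {E : Type*} [PseudoMetricSpace E]

def annulus (x₀ : E) (a b : ℝ) : Set E := {z | dist z x₀ ∈ Set.Ioc a b}

theorem measurableSet_annulus [MeasurableSpace E] [OpensMeasurableSpace E] (x₀ : E) (a b : ℝ) :
    MeasurableSet (annulus x₀ a b) :=
  measurableSet_Ioc.preimage (continuous_id.dist continuous_const).measurable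

theorem exists_lt_mul_measure_annulus_le [MeasurableSpace E] [OpensMeasurableSpace E]
    (μ : Measure E) (x₀ : E) (a : ℝ) (w : ℝ) {N : ℕ} (hN : N ≠ 0) :
    ∃ j < N, (N : ℝ≥0∞) * μ (annulus x₀ (a + w * j) (a + w * j + w)) ≤ μ Set.univ := by
  have hdisj : Pairwise (Function.onFun Disjoint
      fun j : ℕ => annulus x₀ (a + w * j) (a + w * j + w)) := by
    refine (pairwise_disjoint_on _).2 fun i j hij => Set.disjoint_left.2 fun z hi hj => ?_
    have hij' : (i : ℝ) + 1 ≤ j := by exact_mod_cast hij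
    simp only [annulus, Set.mem_ofPred_eq, Set.mem_Ioc] at hi hj
    nlinarith
  obtain ⟨j, hj, hmass⟩ := exists_card_mul_measure_le μ (Finset.nonempty_range_iff.2 hN)
    (hdisj.set_pairwise _) fun j _ => measurableSet_annulus x₀ _ _
  exact ⟨j, Finset.mem_range.1 hj, by simpa using hmass⟩

end Annulus

variable {d : ℕ}

section Cubes

theorem dist_le_sqrt_mul_of_forall_dist_apply_le {x y : Euc d} {c : ℝ} (hc : 0 ≤ c)
    (h : ∀ i, dist (x i) (y i) ≤ c) : dist x y ≤ √d * c := by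
  rw [EuclideanSpace.dist_eq, ← Real.sqrt_sq hc, ← Real.sqrt_mul (Nat.cast_nonneg _)]
  gcongr
  calc ∑ i, dist (x i) (y i) ^ 2 ≤ ∑ _i : Fin d, c ^ 2 := by gcongr with i; exact h i
    _ = d * c ^ 2 := by simp

def cubeIndex (s : ℝ) (x : Euc d) : Fin d → ℤ := fun i => ⌊x i / s⌋

def cube (s : ℝ) (k : Fin d → ℤ) : Set (Euc d) := cubeIndex s ⁻¹' {k}

theorem measurable_cubeIndex (s : ℝ) : Measurable (cubeIndex (d := d) s) :=
  measurable_pi_lambda _ fun i =>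
    Int.measurable_floor.comp ((EuclideanSpace.proj i).continuous.measurable.div_const s)

theorem measurableSet_cube (s : ℝ) (k : Fin d → ℤ) : MeasurableSet (cube s k) :=
  measurable_cubeIndex s (measurableSet_singleton k)

theorem pairwise_disjoint_cube (s : ℝ) : Pairwise (Function.onFun Disjoint (cube (d := d) s)) :=
  pairwise_disjoint_fiber _

theorem iUnion_cube (s : ℝ) : ⋃ k, cube (d := d) s k = Set.univ := by
  ext x
  simp [cube]

theorem cube_subset_closedBall {s : ℝ} (hs : 0 < s) {k : Fin d → ℤ} {x : Euc d}
    (hx : x ∈ cube s k) : cube s k ⊆ closedBall x (√d * s) := by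
  intro y hy
  refine dist_le_sqrt_mul_of_forall_dist_apply_le hs.le fun i => ?_
  have hfloor : ⌊y i / s⌋ = ⌊x i / s⌋ := congrFun (hy.trans hx.symm) i
  have hlt := Int.abs_sub_lt_one_of_floor_eq_floor hfloor
  rw [← sub_div, abs_div, abs_of_pos hs, div_lt_one hs] at hlt
  exact (Real.dist_eq _ _).trans_le hlt.le

/-- The cubes of side `s` that can meet `closedBall x (s / 2)`. -/
def cubeNeighbours (s : ℝ) (x : Euc d) : Finset (Fin d → ℤ) :=
  Fintype.piFinset fun i => {⌊(x i - s / 2) / s⌋, ⌊(x i - s / 2) / s⌋ + 1}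

theorem card_cubeNeighbours_le (s : ℝ) (x : Euc d) : (cubeNeighbours s x).card ≤ 2 ^ d := by
  rw [cubeNeighbours, Fintype.card_piFinset]
  calc ∏ i : Fin d, ({⌊(x i - s / 2) / s⌋, ⌊(x i - s / 2) / s⌋ + 1} : Finset ℤ).card
      ≤ 2 ^ (Finset.univ : Finset (Fin d)).card :=
        Finset.prod_le_pow_card _ _ 2 fun i _ => Finset.card_le_two
    _ = 2 ^ d := by simp

theorem floor_div_eq_or_eq_add_one {a b s : ℝ} (hs : 0 < s) (hab : a ≤ b) (hba : b ≤ a + s) :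
    ⌊b / s⌋ = ⌊a / s⌋ ∨ ⌊b / s⌋ = ⌊a / s⌋ + 1 := by
  have hlow : ⌊a / s⌋ ≤ ⌊b / s⌋ := Int.floor_mono (by gcongr)
  have hup : ⌊b / s⌋ ≤ ⌊a / s⌋ + 1 := by
    rw [← Int.floor_add_one]
    exact Int.floor_mono (by rw [div_add_one hs.ne']; gcongr)
  omega

theorem cubeIndex_sub_mem_cubeNeighbours {s : ℝ} (hs : 0 < s) (x : Euc d) {y : Euc d}
    (hy : ‖y‖ ≤ s / 2) : cubeIndex s (x - y) ∈ cubeNeighbours s x := by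
  rw [cubeNeighbours, Fintype.mem_piFinset]
  intro i
  have hyi : |y i| ≤ s / 2 := (Real.norm_eq_abs _ ▸ PiLp.norm_apply_le y i).trans hy
  rw [abs_le] at hyi
  simp only [Finset.mem_insert, Finset.mem_singleton]
  exact floor_div_eq_or_eq_add_one (b := x i - y i) hs (by linarith) (by linarith)

end Cubes

variable {F : Type*} [NormedAddCommGroup F] [NormedSpace ℝ F]

theorem convOp_congr_ae (σ : Measure (Euc d)) [SFinite σ] {f g : Euc d → F}
    (hfg : f =ᵐ[volume] g) : convOp σ f =ᵐ[volume] convOp σ g := by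
  have hprod := (quasiMeasurePreserving_sub_of_right_invariant (volume : Measure (Euc d))
    σ).ae_eq hfg
  filter_upwards [Measure.ae_ae_of_ae_prod hprod] with x hx
  exact integral_congr_ae hx

theorem aestronglyMeasurable_convOp (σ : Measure (Euc d)) [SFinite σ] {f : Euc d → F}
    (hf : AEStronglyMeasurable f volume) : AEStronglyMeasurable (convOp σ f) volume :=
  (hf.comp_quasiMeasurePreserving
    (quasiMeasurePreserving_sub_of_right_invariant volume σ)).integral_prod_right'

theorem eLpNorm_convOp_le (σ : Measure (Euc d)) [SFinite σ] {P Q : ℝ≥0∞} (hP : P ≠ 0)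
    {f : Euc d → F} (hf : MemLp f P volume) :
    eLpNorm (convOp σ f) Q volume ≤ opNorm (convOp (F := F) σ) P Q * eLpNorm f P volume := by
  by_cases hf0 : eLpNorm f P volume = 0
  · have hzero : convOp σ f =ᵐ[volume] convOp σ 0 :=
      convOp_congr_ae σ ((eLpNorm_eq_zero_iff hf.1 hP).1 hf0)
    have hconv0 : convOp σ (0 : Euc d → F) = 0 := funext fun x => integral_zero _ _
    rw [eLpNorm_congr_ae hzero, hconv0, hf0, eLpNorm_zero, mul_zero]
  · have hratio : eLpNorm (convOp σ f) Q volume / eLpNorm f P volume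
        ≤ opNorm (convOp (F := F) σ) P Q :=
      le_iSup₂_of_le f hf (le_iSup_of_le hf0 le_rfl)
    rwa [ENNReal.div_le_iff_le_mul (Or.inl hf0) (Or.inl hf.2.ne)] at hratio

theorem eLpNorm_convOp_indicator_le (σ : Measure (Euc d)) [SFinite σ] {p : ℝ} (hp : 0 < p)
    {f : Euc d → F} (hf : MemLp f (ENNReal.ofReal p) volume) {E : Set (Euc d)}
    (hE : MeasurableSet E) (Q : ℝ≥0∞) :
    eLpNorm (convOp σ (E.indicator f)) Q volume
      ≤ opNorm (convOp (F := F) σ) (ENNReal.ofReal p) Q * lpMass volume p f E ^ (1 / p) := by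
  rw [← eLpNorm_indicator_eq_lpMass volume hp f hE]
  exact eLpNorm_convOp_le σ (by simpa using hp) (hf.indicator hE)

theorem lintegral_enorm_convOp_indicator_rpow_le (σ : Measure (Euc d)) [SFinite σ] {p q : ℝ}
    (hp : 0 < p) (hq : 0 < q) {f : Euc d → F} (hf : MemLp f (ENNReal.ofReal p) volume)
    {E : Set (Euc d)} (hE : MeasurableSet E) :
    ∫⁻ x, ‖convOp σ (E.indicator f) x‖ₑ ^ q
      ≤ opNorm (convOp (F := F) σ) (ENNReal.ofReal p) (ENNReal.ofReal q) ^ q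
          * lpMass volume p f E ^ (q / p) := by
  rw [← eLpNorm_ofReal_rpow volume hq, div_eq_mul_one_div q p, mul_comm q, ENNReal.rpow_mul,
    ← ENNReal.mul_rpow_of_nonneg _ _ hq.le]
  exact ENNReal.rpow_le_rpow (eLpNorm_convOp_indicator_le σ hp hf hE _) hq.le

theorem convOp_indicator_apply_eq_zero {σ : Measure (Euc d)} {ρ : ℝ}
    (hσ : σ (closedBall 0 ρ)ᶜ = 0) {s : Set (Euc d)} (f : Euc d → F) {x : Euc d}
    (hx : ∀ y ∈ closedBall 0 ρ, x - y ∉ s) : convOp σ (s.indicator f) x = 0 := by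
  refine integral_eq_zero_of_ae ?_
  filter_upwards [measure_eq_zero_iff_ae_notMem.1 hσ] with y hy
  exact Set.indicator_of_notMem (hx y (not_not.1 hy)) f

theorem enorm_convOp_le_sum {σ : Measure (Euc d)} {ι : Type*} (s : Finset ι)
    {E : ι → Set (Euc d)} (hE : ∀ k, MeasurableSet (E k)) {f : Euc d → F} {x : Euc d}
    (hdecomp : ∀ᵐ y ∂σ, f (x - y) = ∑ k ∈ s, (E k).indicator f (x - y)) :
    ‖convOp σ f x‖ₑ ≤ ∑ k ∈ s, ‖convOp σ ((E k).indicator f) x‖ₑ := by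
  -- If `y ↦ f (x - y)` is not `σ`-integrable, the Bochner integral makes `convOp σ f x = 0`.
  by_cases hint : Integrable (fun y => f (x - y)) σ
  · have hpieces : ∀ k ∈ s, Integrable (fun y => (E k).indicator f (x - y)) σ := fun k _ =>
      hint.indicator ((hE k).preimage (measurable_const.sub measurable_id))
    have hsum : convOp σ f x = ∑ k ∈ s, convOp σ ((E k).indicator f) x := by
      rw [convOp, integral_congr_ae hdecomp, integral_finsetSum s hpieces]
      rfl
    rw [hsum]
    exact enorm_sum_le _ _
  · simp [convOp, integral_undef hint]

def IsNearExtremizer (σ : Measure (Euc d)) (p q η : ℝ) (f : Euc d → F) : Prop :=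
  ENNReal.ofReal (1 - η) * opNorm (convOp (F := F) σ) (ENNReal.ofReal p) (ENNReal.ofReal q)
      * eLpNorm f (ENNReal.ofReal p) volume
    < eLpNorm (convOp σ f) (ENNReal.ofReal q) volume

theorem enorm_convOp_le_sum_cube {σ : Measure (Euc d)} {s : ℝ} (hs : 0 < s)
    (hσ : σ (closedBall 0 (s / 2))ᶜ = 0) (f : Euc d → F) (x : Euc d) :
    ‖convOp σ f x‖ₑ ≤ ∑ k ∈ cubeNeighbours s x, ‖convOp σ ((cube s k).indicator f) x‖ₑ := by
  refine enorm_convOp_le_sum _ (measurableSet_cube s) ?_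
  filter_upwards [measure_eq_zero_iff_ae_notMem.1 hσ] with y hy
  rw [← Finset.indicator_biUnion_apply _ _ ((pairwise_disjoint_cube s).set_pairwise _),
    Set.indicator_of_mem]
  refine Set.mem_iUnion₂.2 ⟨_, cubeIndex_sub_mem_cubeNeighbours hs x ?_, rfl⟩
  simpa using not_not.1 hy

theorem lintegral_enorm_convOp_rpow_le_tsum_cube (σ : Measure (Euc d)) [SFinite σ] {s : ℝ}
    (hs : 0 < s) (hσ : σ (closedBall 0 (s / 2))ᶜ = 0) {q : ℝ} (hq : 1 ≤ q) {f : Euc d → F}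
    (hf : AEStronglyMeasurable f volume) :
    ∫⁻ x, ‖convOp σ f x‖ₑ ^ q
      ≤ (2 ^ d) ^ (q - 1) * ∑' k, ∫⁻ x, ‖convOp σ ((cube s k).indicator f) x‖ₑ ^ q := by
  have hpointwise : ∀ x, ‖convOp σ f x‖ₑ ^ q
      ≤ (2 ^ d) ^ (q - 1) * ∑' k, ‖convOp σ ((cube s k).indicator f) x‖ₑ ^ q := fun x =>
    calc ‖convOp σ f x‖ₑ ^ q
        ≤ (∑ k ∈ cubeNeighbours s x, ‖convOp σ ((cube s k).indicator f) x‖ₑ) ^ q := by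
          gcongr; exact enorm_convOp_le_sum_cube hs hσ f x
      _ ≤ ((cubeNeighbours s x).card : ℝ≥0∞) ^ (q - 1)
            * ∑ k ∈ cubeNeighbours s x, ‖convOp σ ((cube s k).indicator f) x‖ₑ ^ q :=
          ENNReal.rpow_sum_le_const_mul_sum_rpow _ _ hq
      _ ≤ (2 ^ d) ^ (q - 1) * ∑' k, ‖convOp σ ((cube s k).indicator f) x‖ₑ ^ q := by
          gcongr
          · exact_mod_cast card_cubeNeighbours_le s x
          · exact ENNReal.sum_le_tsum _
  have hmeas : ∀ k, AEMeasurable (fun x => ‖convOp σ ((cube s k).indicator f) x‖ₑ ^ q) volume :=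
    fun k => ((aestronglyMeasurable_convOp σ
      (hf.indicator (measurableSet_cube s k))).enorm).pow_const q
  calc ∫⁻ x, ‖convOp σ f x‖ₑ ^ q
      ≤ ∫⁻ x, (2 ^ d) ^ (q - 1) * ∑' k, ‖convOp σ ((cube s k).indicator f) x‖ₑ ^ q :=
        lintegral_mono hpointwise
    _ = (2 ^ d) ^ (q - 1) * ∑' k, ∫⁻ x, ‖convOp σ ((cube s k).indicator f) x‖ₑ ^ q := by
        rw [lintegral_const_mul' _ _ (by simp), lintegral_tsum hmeas]

theorem eLpNorm_convOp_rpow_le_iSup_lpMass_cube (σ : Measure (Euc d)) [SFinite σ] {s : ℝ}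
    (hs : 0 < s) (hσ : σ (closedBall 0 (s / 2))ᶜ = 0) {p q : ℝ} (hp : 0 < p) (hpq : p ≤ q)
    (hq : 1 ≤ q) {f : Euc d → F} (hf : MemLp f (ENNReal.ofReal p) volume) :
    eLpNorm (convOp σ f) (ENNReal.ofReal q) volume ^ q
      ≤ (2 ^ d) ^ (q - 1) * opNorm (convOp (F := F) σ) (ENNReal.ofReal p) (ENNReal.ofReal q) ^ q
        * ((⨆ k, lpMass volume p f (cube s k)) ^ (q / p - 1) * lpMass volume p f Set.univ) := by
  have hq0 : 0 < q := by linarith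
  have htotal : ∑' k, lpMass volume p f (cube s k) = lpMass volume p f Set.univ := by
    rw [← measure_iUnion (pairwise_disjoint_cube s) (measurableSet_cube s), iUnion_cube]
  rw [eLpNorm_ofReal_rpow volume hq0, mul_assoc, ← htotal]
  calc _ ≤ _ := lintegral_enorm_convOp_rpow_le_tsum_cube σ hs hσ hq hf.1
    _ ≤ (2 ^ d) ^ (q - 1) * ∑' k,
          opNorm (convOp (F := F) σ) (ENNReal.ofReal p) (ENNReal.ofReal q) ^ q
            * lpMass volume p f (cube s k) ^ (q / p) := by
        gcongr with k
        exact lintegral_enorm_convOp_indicator_rpow_le σ hp hq0 hf (measurableSet_cube s k)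
    _ ≤ _ := by
        rw [ENNReal.tsum_mul_left]
        gcongr
        exact ENNReal.tsum_rpow_le_iSup_rpow_mul_tsum _ ((one_le_div hp).2 hpq)

theorem exists_lt_lpMass_cube (σ : Measure (Euc d)) [SFinite σ] {s : ℝ} (hs : 0 < s)
    (hσ : σ (closedBall 0 (s / 2))ᶜ = 0) {p q : ℝ} (hp : 0 < p) (hpq : p ≤ q) (hq : 1 ≤ q)
    {f : Euc d → F} (hf : MemLp f (ENNReal.ofReal p) volume) {η : ℝ} {c : ℝ≥0∞}
    (hc : (2 ^ d) ^ (q - 1) * c ^ (q / p - 1) ≤ ENNReal.ofReal (1 - η) ^ q)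
    (hnear : IsNearExtremizer σ p q η f) :
    ∃ k, c * lpMass volume p f Set.univ < lpMass volume p f (cube s k) := by
  by_contra! hsmall
  set A := opNorm (convOp (F := F) σ) (ENNReal.ofReal p) (ENNReal.ofReal q)
  set I := lpMass volume p f Set.univ
  have hq0 : 0 < q := by linarith
  have ht : 1 ≤ q / p := (one_le_div hp).2 hpq
  have hbound : eLpNorm (convOp σ f) (ENNReal.ofReal q) volume ^ q
      ≤ (ENNReal.ofReal (1 - η) * A * eLpNorm f (ENNReal.ofReal p) volume) ^ q :=
    calc _ ≤ (2 ^ d) ^ (q - 1) * A ^ q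
          * ((⨆ k, lpMass volume p f (cube s k)) ^ (q / p - 1) * I) :=
          eLpNorm_convOp_rpow_le_iSup_lpMass_cube σ hs hσ hp hpq hq hf
      _ ≤ (2 ^ d) ^ (q - 1) * A ^ q * ((c * I) ^ (q / p - 1) * I) := by
          gcongr
          exact iSup_le hsmall
      _ = (2 ^ d) ^ (q - 1) * c ^ (q / p - 1) * A ^ q * I ^ (q / p) := by
          rw [ENNReal.mul_rpow_of_nonneg _ _ (by linarith), ENNReal.rpow_eq_rpow_sub_one_mul I ht]
          ring
      _ ≤ ENNReal.ofReal (1 - η) ^ q * A ^ q * I ^ (q / p) := by gcongr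
      _ = (ENNReal.ofReal (1 - η) * A * eLpNorm f (ENNReal.ofReal p) volume) ^ q := by
          rw [eLpNorm_eq_lpMass_univ volume hp, ENNReal.mul_rpow_of_nonneg _ _ hq0.le,
            ENNReal.mul_rpow_of_nonneg _ _ hq0.le, ← ENNReal.rpow_mul, one_div_mul_eq_div]
  exact (ENNReal.rpow_lt_rpow hnear hq0).not_ge hbound

theorem exists_lt_lpMass_closedBall (σ : Measure (Euc d)) [SFinite σ] {s : ℝ} (hs : 0 < s)
    (hσ : σ (closedBall 0 (s / 2))ᶜ = 0) {p q : ℝ} (hp : 0 < p) (hpq : p ≤ q) (hq : 1 ≤ q)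
    {f : Euc d → F} (hf : MemLp f (ENNReal.ofReal p) volume) {η : ℝ} {c : ℝ≥0∞}
    (hc : (2 ^ d) ^ (q - 1) * c ^ (q / p - 1) ≤ ENNReal.ofReal (1 - η) ^ q)
    (hnear : IsNearExtremizer σ p q η f) :
    ∃ x₀, c * lpMass volume p f Set.univ < lpMass volume p f (closedBall x₀ (√d * s)) := by
  obtain ⟨k, hk⟩ := exists_lt_lpMass_cube σ hs hσ hp hpq hq hf hc hnear
  obtain ⟨x₀, hx₀⟩ := nonempty_of_measure_ne_zero (ne_bot_of_gt hk)
  exact ⟨x₀, hk.trans_le (measure_mono (cube_subset_closedBall hs hx₀))⟩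

theorem convOp_indicator_closedBall_or_compl_eq_zero {σ : Measure (Euc d)} {ρ : ℝ}
    (hσ : σ (closedBall 0 ρ)ᶜ = 0) (f : Euc d → F) (x₀ : Euc d) (r : ℝ) (x : Euc d) :
    convOp σ ((closedBall x₀ r).indicator f) x = 0
      ∨ convOp σ ((closedBall x₀ (r + 2 * ρ))ᶜ.indicator f) x = 0 := by
  by_cases hx : dist x x₀ ≤ r + ρ
  · refine Or.inr (convOp_indicator_apply_eq_zero hσ f fun y hy => ?_)
    rw [mem_closedBall, dist_zero_right] at hy
    rw [Set.notMem_compl_iff, mem_closedBall]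
    linarith [dist_triangle (x - y) x x₀, dist_self_sub_left x y]
  · refine Or.inl (convOp_indicator_apply_eq_zero hσ f fun y hy => ?_)
    rw [mem_closedBall, dist_zero_right] at hy
    rw [mem_closedBall, not_le]
    linarith [dist_triangle x (x - y) x₀, dist_self_sub_left x y, dist_comm x (x - y)]

theorem enorm_convOp_le_add_add {σ : Measure (Euc d)} (f : Euc d → F) (x₀ : Euc d) {r w : ℝ}
    (hw : 0 ≤ w) (x : Euc d) :
    ‖convOp σ f x‖ₑ ≤ ‖convOp σ ((closedBall x₀ r).indicator f) x‖ₑ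
      + ‖convOp σ ((closedBall x₀ (r + w))ᶜ.indicator f) x‖ₑ
      + ‖convOp σ ((annulus x₀ r (r + w)).indicator f) x‖ₑ := by
  have hpieces : ∀ z, f z = (closedBall x₀ r).indicator f z
      + (closedBall x₀ (r + w))ᶜ.indicator f z + (annulus x₀ r (r + w)).indicator f z := by
    intro z
    by_cases h₁ : dist z x₀ ≤ r
    · have h₂ : dist z x₀ ≤ r + w := by linarith
      simp [annulus, h₁, h₂]
    · by_cases h₂ : dist z x₀ ≤ r + w <;> simp [Set.indicator_apply, annulus, h₁, h₂]
  have hE : ∀ k, MeasurableSet (![closedBall x₀ r, (closedBall x₀ (r + w))ᶜ,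
      annulus x₀ r (r + w)] k) := by
    intro k
    fin_cases k
    exacts [measurableSet_closedBall, measurableSet_closedBall.compl,
      measurableSet_annulus x₀ _ _]
  simpa [Fin.sum_univ_three] using enorm_convOp_le_sum (σ := σ) (x := x) Finset.univ hE
    (Eventually.of_forall fun y => by simpa [Fin.sum_univ_three] using hpieces (x - y))

theorem eLpNorm_enorm_convOp_add_le (σ : Measure (Euc d)) [SFinite σ] {ρ : ℝ}
    (hσ : σ (closedBall 0 ρ)ᶜ = 0) {p q : ℝ} (hp : 0 < p) (hq : 0 < q) {f : Euc d → F}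
    (hf : MemLp f (ENNReal.ofReal p) volume) (x₀ : Euc d) (r : ℝ) :
    eLpNorm (fun x => ‖convOp σ ((closedBall x₀ r).indicator f) x‖ₑ
        + ‖convOp σ ((closedBall x₀ (r + 2 * ρ))ᶜ.indicator f) x‖ₑ) (ENNReal.ofReal q) volume
      ≤ opNorm (convOp (F := F) σ) (ENNReal.ofReal p) (ENNReal.ofReal q)
          * (lpMass volume p f (closedBall x₀ r) ^ (q / p)
            + lpMass volume p f (closedBall x₀ (r + 2 * ρ))ᶜ ^ (q / p)) ^ (1 / q) := by
  set A := opNorm (convOp (F := F) σ) (ENNReal.ofReal p) (ENNReal.ofReal q)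
  rw [eLpNorm_ofReal_eq volume hq]
  simp only [enorm_eq_self]
  rw [lintegral_add_rpow_of_disjoint
    (aestronglyMeasurable_convOp σ (hf.1.indicator measurableSet_closedBall)).enorm
    (fun x => by simpa using convOp_indicator_closedBall_or_compl_eq_zero hσ f x₀ r x) hq]
  calc _ ≤ (A ^ q * lpMass volume p f (closedBall x₀ r) ^ (q / p)
        + A ^ q * lpMass volume p f (closedBall x₀ (r + 2 * ρ))ᶜ ^ (q / p)) ^ (1 / q) := by
        gcongr
        · exact lintegral_enorm_convOp_indicator_rpow_le σ hp hq hf measurableSet_closedBall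
        · exact lintegral_enorm_convOp_indicator_rpow_le σ hp hq hf
            measurableSet_closedBall.compl
    _ = _ := by
        rw [← mul_add, ENNReal.mul_rpow_of_nonneg _ _ (by positivity), ← ENNReal.rpow_mul,
          mul_one_div_cancel hq.ne', ENNReal.rpow_one]

theorem eLpNorm_convOp_le_of_annulus (σ : Measure (Euc d)) [SFinite σ] {ρ : ℝ} (hρ : 0 ≤ ρ)
    (hσ : σ (closedBall 0 ρ)ᶜ = 0) {p q : ℝ} (hp : 0 < p) (hq : 1 ≤ q) {f : Euc d → F}
    (hf : MemLp f (ENNReal.ofReal p) volume) (x₀ : Euc d) (r : ℝ) :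
    eLpNorm (convOp σ f) (ENNReal.ofReal q) volume
      ≤ opNorm (convOp (F := F) σ) (ENNReal.ofReal p) (ENNReal.ofReal q)
          * (lpMass volume p f (closedBall x₀ r) ^ (q / p)
            + lpMass volume p f (closedBall x₀ (r + 2 * ρ))ᶜ ^ (q / p)) ^ (1 / q)
        + opNorm (convOp (F := F) σ) (ENNReal.ofReal p) (ENNReal.ofReal q)
          * lpMass volume p f (annulus x₀ r (r + 2 * ρ)) ^ (1 / p) := by
  set φ : Euc d → ℝ≥0∞ := fun x => ‖convOp σ ((closedBall x₀ r).indicator f) x‖ₑ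
    + ‖convOp σ ((closedBall x₀ (r + 2 * ρ))ᶜ.indicator f) x‖ₑ
  set ψ : Euc d → ℝ≥0∞ := fun x => ‖convOp σ ((annulus x₀ r (r + 2 * ρ)).indicator f) x‖ₑ
  have hφ : AEStronglyMeasurable φ volume :=
    ((aestronglyMeasurable_convOp σ (hf.1.indicator measurableSet_closedBall)).enorm.add
      (aestronglyMeasurable_convOp σ
        (hf.1.indicator measurableSet_closedBall.compl)).enorm).aestronglyMeasurable
  have hψ : AEStronglyMeasurable ψ volume := (aestronglyMeasurable_convOp σ
    (hf.1.indicator (measurableSet_annulus x₀ _ _))).enorm.aestronglyMeasurable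
  calc eLpNorm (convOp σ f) (ENNReal.ofReal q) volume
      ≤ eLpNorm (φ + ψ) (ENNReal.ofReal q) volume :=
        eLpNorm_mono_enorm (by simpa using enorm_convOp_le_add_add f x₀ (by positivity))
    _ ≤ eLpNorm φ (ENNReal.ofReal q) volume + eLpNorm ψ (ENNReal.ofReal q) volume :=
        eLpNorm_add_le hφ hψ (by simpa using hq)
    _ ≤ _ := add_le_add (eLpNorm_enorm_convOp_add_le σ hσ hp (by linarith) hf x₀ r)
        ((eLpNorm_enorm _).trans_le
          (eLpNorm_convOp_indicator_le σ hp hf (measurableSet_annulus x₀ _ _) _))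

theorem lpMass_compl_ball_le (σ : Measure (Euc d)) [SFinite σ] {ρ : ℝ} (hρ : 0 < ρ)
    (hσ : σ (closedBall 0 ρ)ᶜ = 0) {p q : ℝ} (hp : 0 < p) (hpq : p ≤ q) (hq : 1 ≤ q)
    {f : Euc d → F} (hf : MemLp f (ENNReal.ofReal p) volume) {η m : ℝ} (hη₀ : 0 ≤ η)
    (hη : 2 * η ≤ 1) (hm : ENNReal.ofReal (1 - m) ^ (1 / p - 1 / q) ≤ ENNReal.ofReal (1 - 2 * η))
    {N : ℕ} (hN : 1 ≤ ENNReal.ofReal η ^ p * N) {x₀ : Euc d} {R₁ : ℝ}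
    (hheavy : ENNReal.ofReal m * lpMass volume p f Set.univ ≤ lpMass volume p f (closedBall x₀ R₁))
    (hnear : IsNearExtremizer σ p q η f) :
    lpMass volume p f (ball x₀ (R₁ + 2 * ρ * (N + 1)))ᶜ
      ≤ ENNReal.ofReal m * lpMass volume p f Set.univ := by
  by_contra! htail
  set μ := lpMass volume p f
  set I := μ Set.univ
  set A := opNorm (convOp (F := F) σ) (ENNReal.ofReal p) (ENNReal.ofReal q)
  obtain ⟨j, hj, hshell⟩ := exists_lt_mul_measure_annulus_le μ x₀ R₁ (2 * ρ)
    (N := N) (by rintro rfl; simp at hN)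
  set r := R₁ + 2 * ρ * j
  have hjN : (j : ℝ) + 1 ≤ N := by exact_mod_cast hj
  have hinner : ENNReal.ofReal m * I ≤ μ (closedBall x₀ r) :=
    hheavy.trans (measure_mono (closedBall_subset_closedBall
      (le_add_of_nonneg_right (by positivity))))
  have houter : ENNReal.ofReal m * I ≤ μ (closedBall x₀ (r + 2 * ρ))ᶜ :=
    htail.le.trans (measure_mono (Set.compl_subset_compl.2
      (closedBall_subset_ball (by nlinarith))))
  have hsum : μ (closedBall x₀ r) + μ (closedBall x₀ (r + 2 * ρ))ᶜ ≤ I := by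
    rw [← measure_union _ measurableSet_closedBall.compl]
    · exact measure_mono (Set.subset_univ _)
    · exact Set.disjoint_compl_right_iff_subset.2 (closedBall_subset_closedBall (by linarith))
  have hupper : eLpNorm (convOp σ f) (ENNReal.ofReal q) volume
      ≤ ENNReal.ofReal (1 - η) * A * eLpNorm f (ENNReal.ofReal p) volume :=
    calc _ ≤ A * (μ (closedBall x₀ r) ^ (q / p) + μ (closedBall x₀ (r + 2 * ρ))ᶜ ^ (q / p))
            ^ (1 / q) + A * μ (annulus x₀ r (r + 2 * ρ)) ^ (1 / p) :=
          eLpNorm_convOp_le_of_annulus σ hρ.le hσ hp hq hf x₀ r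
      _ ≤ A * (ENNReal.ofReal (1 - 2 * η) * I ^ (1 / p))
            + A * (ENNReal.ofReal η * I ^ (1 / p)) := by
          gcongr
          · exact (ENNReal.rpow_add_rpow_rpow_le_of_le_add (lpMass_univ_ne_top volume hp hf)
              hsum hinner houter hp hpq).trans (by gcongr)
          · exact ENNReal.rpow_one_div_le_of_mul_le hp hN hshell
      _ = ENNReal.ofReal (1 - η) * A * eLpNorm f (ENNReal.ofReal p) volume := by
          rw [eLpNorm_eq_lpMass_univ volume hp, ← mul_add, ← add_mul,
            ← ENNReal.ofReal_add (by linarith) hη₀, show 1 - 2 * η + η = 1 - η by ring]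
          ring
  exact hnear.not_ge hupper

/-- The fraction of the `L^p` mass allowed to escape the localization ball. -/
def tailFraction (θ η : ℝ) : ℝ := 1 - (1 - 2 * η) ^ (1 / θ)

theorem tendsto_tailFraction (θ : ℝ) : Tendsto (tailFraction θ) (𝓝 0) (𝓝 0) := by
  have hcont : ContinuousAt (tailFraction θ) 0 :=
    continuousAt_const.sub ((continuousAt_const.sub
      (continuousAt_const.mul continuousAt_id)).rpow_const (Or.inl (by norm_num)))
  simpa [tailFraction] using hcont.tendsto

theorem tendsto_tailFraction_rpow (θ : ℝ) {r : ℝ} (hr : 0 < r) :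
    Tendsto (fun η => tailFraction θ η ^ r) (𝓝[>] 0) (𝓝 0) := by
  have h := (tendsto_tailFraction θ).rpow_const (p := r) (Or.inr hr.le)
  rw [Real.zero_rpow hr.ne'] at h
  exact h.mono_left nhdsWithin_le_nhds

theorem tailFraction_nonneg {θ η : ℝ} (hθ : 0 < θ) (hη₀ : 0 ≤ η) (hη : 2 * η ≤ 1) :
    0 ≤ tailFraction θ η := by
  have : (1 - 2 * η) ^ (1 / θ) ≤ 1 := Real.rpow_le_one (by linarith) (by linarith) (by positivity)
  rw [tailFraction]
  linarith

theorem ofReal_one_sub_tailFraction_rpow {θ η : ℝ} (hθ : 0 < θ) (hη : 2 * η ≤ 1) :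
    ENNReal.ofReal (1 - tailFraction θ η) ^ θ = ENNReal.ofReal (1 - 2 * η) := by
  rw [tailFraction, sub_sub_cancel, ENNReal.ofReal_rpow_of_nonneg (by positivity) hθ.le,
    one_div, Real.rpow_inv_rpow (by linarith) hθ.ne']

theorem eventually_mul_tailFraction_rpow_lt (θ : ℝ) {t : ℝ} (ht : 0 < t) {C : ℝ≥0∞}
    (hC : C ≠ ⊤) (q : ℝ) :
    ∀ᶠ η in 𝓝 0, C * ENNReal.ofReal (tailFraction θ η) ^ t < ENNReal.ofReal (1 - η) ^ q := by
  have hleft : Tendsto (fun η => C * ENNReal.ofReal (tailFraction θ η) ^ t) (𝓝 0) (𝓝 0) := by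
    have h := ((ENNReal.continuous_rpow_const (y := t)).tendsto _).comp
      (ENNReal.tendsto_ofReal (tendsto_tailFraction θ))
    rw [ENNReal.ofReal_zero, ENNReal.zero_rpow_of_pos ht] at h
    simpa using ENNReal.Tendsto.const_mul h (Or.inr hC)
  have hright : Tendsto (fun η : ℝ => ENNReal.ofReal (1 - η) ^ q) (𝓝 0) (𝓝 1) := by
    have h := ((ENNReal.continuous_rpow_const (y := q)).tendsto _).comp
      (ENNReal.tendsto_ofReal ((tendsto_const_nhds (x := (1 : ℝ))).sub (tendsto_id (x := 𝓝 0))))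
    simpa [Function.comp_def] using h
  exact hleft.eventually_lt hright zero_lt_one

end SpatialLocalization

open SpatialLocalization

theorem spatial_localization_general
    (d : ℕ)
    (σ : Measure (Euc d)) [IsProbabilityMeasure σ]
    (hcpt : ∃ K : Set (Euc d), IsCompact K ∧ σ Kᶜ = 0)
    (p q : ℝ) (hp : 1 < p) (hpq : p < q) :
    ∃ δ : ℝ → ℝ, Tendsto δ (𝓝[>] (0:ℝ)) (𝓝 0) ∧
      ∃ η₀ : ℝ, 0 < η₀ ∧ ∀ η : ℝ, 0 < η → η < η₀ →
        ∃ R : ℝ, 0 < R ∧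
          ∀ f : Euc d → ℂ, MemLp f (ENNReal.ofReal p) volume →
            ENNReal.ofReal (1 - η)
                * opNorm (convOp (F := ℂ) σ) (ENNReal.ofReal p) (ENNReal.ofReal q)
                * eLpNorm f (ENNReal.ofReal p) volume
              < eLpNorm (convOp σ f) (ENNReal.ofReal q) volume →
            ∃ x₀ : Euc d,
              eLpNorm ((Metric.ball x₀ R)ᶜ.indicator f) (ENNReal.ofReal p) volume
                ≤ ENNReal.ofReal (δ η) * eLpNorm f (ENNReal.ofReal p) volume := by
  obtain ⟨ρ, hρ, hσ⟩ := exists_pos_measure_compl_closedBall_eq_zero hcpt 0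
  have hp0 : 0 < p := by linarith
  have hq1 : 1 ≤ q := by linarith
  set θ := 1 / p - 1 / q
  have hθ : 0 < θ := sub_pos.2 (one_div_lt_one_div_of_lt hp0 hpq)
  refine ⟨fun η => tailFraction θ η ^ (1 / p), tendsto_tailFraction_rpow θ (by positivity), ?_⟩
  -- For small `η` the escaping fraction `tailFraction θ η` is also forced onto a single cube.
  obtain ⟨η₀, hη₀, hsmall⟩ := Metric.eventually_nhds_iff.1 <|
    (eventually_lt_nhds (by norm_num : (0 : ℝ) < 1 / 2)).and <|
      eventually_mul_tailFraction_rpow_lt θ (by rwa [sub_pos, one_lt_div hp0])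
        (C := (2 ^ d) ^ (q - 1)) (by simp) q
  refine ⟨η₀, hη₀, fun η hη hηη₀ => ?_⟩
  obtain ⟨hη2, hc⟩ := hsmall (y := η) (by rwa [Real.dist_eq, sub_zero, abs_of_pos hη])
  obtain ⟨N, hN⟩ := ENNReal.exists_nat_mul_gt (a := ENNReal.ofReal η ^ p) (b := 1)
    (by simp [hη, hp0]) ENNReal.one_ne_top
  refine ⟨√d * (2 * ρ) + 2 * ρ * (N + 1), by positivity, fun f hf hnear => ?_⟩
  obtain ⟨x₀, hx₀⟩ := exists_lt_lpMass_closedBall σ (s := 2 * ρ) (by positivity)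
    (by rwa [mul_div_cancel_left₀ _ two_ne_zero]) hp0 hpq.le hq1 hf hc.le hnear
  refine ⟨x₀, eLpNorm_indicator_le_of_lpMass_le volume hp0 measurableSet_ball.compl
    (tailFraction_nonneg hθ hη.le (by linarith)) ?_⟩
  exact lpMass_compl_ball_le σ hρ hσ hp0 hpq.le hq1 hf hη.le (by linarith)
    (ofReal_one_sub_tailFraction_rpow hθ (by linarith)).le (by rw [mul_comm]; exact hN.le)
    hx₀.le hnear

/-- Spatial localization of near-extremizers (Lemma 2.2). -/
theorem spatial_localization
    (d : ℕ) (hd : 1 ≤ d)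
    (σ : Measure (Euc d)) [IsProbabilityMeasure σ]
    (hcpt : ∃ K : Set (Euc d), IsCompact K ∧ σ Kᶜ = 0)
    (p q : ℝ) (hp : 1 < p) (hpq : p < q)
    (hT : opNorm (convOp (F := ℂ) σ) (ENNReal.ofReal p) (ENNReal.ofReal q) ≠ 0)
    (hvalid : opNorm (convOp (F := ℂ) σ) (ENNReal.ofReal p) (ENNReal.ofReal q) < ⊤) :
    ∃ δ : ℝ → ℝ, Tendsto δ (𝓝[>] (0:ℝ)) (𝓝 0) ∧
      ∃ η₀ : ℝ, 0 < η₀ ∧ ∀ η : ℝ, 0 < η → η < η₀ →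
        ∃ R : ℝ, 0 < R ∧
          ∀ f : Euc d → ℂ, MemLp f (ENNReal.ofReal p) volume →
            ENNReal.ofReal (1 - η)
                * opNorm (convOp (F := ℂ) σ) (ENNReal.ofReal p) (ENNReal.ofReal q)
                * eLpNorm f (ENNReal.ofReal p) volume
              < eLpNorm (convOp σ f) (ENNReal.ofReal q) volume →
            ∃ x₀ : Euc d,
              eLpNorm ((Metric.ball x₀ R)ᶜ.indicator f) (ENNReal.ofReal p) volume
                ≤ ENNReal.ofReal (δ η) * eLpNorm f (ENNReal.ofReal p) volume :=
  spatial_localization_general d σ hcpt p q hp hpq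
end
end

section
/- Suppose σ is a compactly supported Borel probability measure on ℝ^d, 1 < p < q < ∞ is a valid pair for the convolution operator T, and f is a normalized (‖f‖_p = 1) nonnegative extremizer for T : L^p(ℝ^d) → L^q(ℝ^d). Then f satisfies the Euler–Lagrange equation f(x) = ‖T‖_{p,q}^{−q/(p−1)} ( T^*((Tf)^{q−1}) (x) )^{1/(p−1)} for almost every x ∈ ℝ^d, where T^*g(x) = ∫_{ℝ^d} g(x+y) dσ(y) is the adjoint of T. -/
open MeasureTheory Metric Filter
open scoped ENNReal Topology

noncomputable section

/-!
Work with `F = f` as an `ℝ≥0∞`-valued function, for which `T` and `T^*` are lower integrals and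
`Λ = ‖T‖_{p,q}` bounds `‖T φ‖_q / ‖φ‖_p` for every measurable `φ ≥ 0` (truncate `φ` and use
monotone convergence). Put `g = (T F)^{q-1}`, so that `‖g‖_{q'} = Λ^{q-1}`. Duality
`∫ (T φ) g = ∫ φ (T^* g)` and Hölder's inequality give `∫ φ (T^* g) ≤ Λ^q ‖φ‖_p`, hence
`‖T^* g‖_{p'} ≤ Λ^q` by the converse of Hölder's inequality. On the other hand
`∫ F (T^* g) = ∫ (T F)^q = Λ^q` and `‖F‖_p = 1`, so Hölder's inequality for `F` and `T^* g` is an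
equality. Integrating Young's inequality, its equality case holds pointwise a.e., which forces
`T^* g = Λ^q F^{p-1}`; solving for `F` gives the equation.
-/

section Auxiliary

variable {α : Type*} [MeasurableSpace α] {μ : Measure α}

lemma ENNReal.mul_rpow_sub_one {r : ℝ} (hr : 1 ≤ r) (x : ℝ≥0∞) : x * x ^ (r - 1) = x ^ r := by
  calc x * x ^ (r - 1) = x ^ (1 : ℝ) * x ^ (r - 1) := by rw [ENNReal.rpow_one]
    _ = x ^ r := by
      rw [← ENNReal.rpow_add_of_nonneg _ _ zero_le_one (sub_nonneg.2 hr), add_sub_cancel]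

lemma lintegral_rpow_eq_zero_iff {f : α → ℝ≥0∞} (hf : Measurable f) {r : ℝ} (hr : 0 < r) :
    ∫⁻ x, f x ^ r ∂μ = 0 ↔ f =ᵐ[μ] 0 := by
  rw [lintegral_eq_zero_iff (hf.pow_const r)]
  simp [Filter.EventuallyEq, ENNReal.rpow_eq_zero_iff, hr, not_lt.2 hr.le]

lemma eLpNorm_toReal {G : α → ℝ≥0∞} (hG : ∀ᵐ x ∂μ, G x ≠ ∞) {r : ℝ} (hr : 0 < r) :
    eLpNorm (fun x => (G x).toReal) (ENNReal.ofReal r) μ = (∫⁻ x, G x ^ r ∂μ) ^ (1 / r) := by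
  rw [eLpNorm_eq_lintegral_rpow_enorm_toReal (by simpa using hr) ENNReal.ofReal_ne_top,
    ENNReal.toReal_ofReal hr.le]
  congr 1
  refine lintegral_congr_ae (hG.mono fun x hx => ?_)
  dsimp only
  rw [Real.enorm_eq_ofReal ENNReal.toReal_nonneg, ENNReal.ofReal_toReal hx]

lemma eLpNorm_toReal_eq_iff {G : α → ℝ≥0∞} (hG : ∀ᵐ x ∂μ, G x ≠ ∞) {r : ℝ} (hr : 0 < r)
    {c : ℝ≥0∞} :
    eLpNorm (fun x => (G x).toReal) (ENNReal.ofReal r) μ = c ↔ ∫⁻ x, G x ^ r ∂μ = c ^ r := by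
  rw [eLpNorm_toReal hG hr, one_div]
  constructor
  · rintro rfl
    exact (ENNReal.rpow_inv_rpow hr.ne' _).symm
  · intro h
    rw [h, ENNReal.rpow_rpow_inv hr.ne']

lemma ae_rpow_ne_top {f : α → ℝ≥0∞} (hf : Measurable f) {r : ℝ} (hr : 0 < r)
    (hfr : ∫⁻ x, f x ^ r ∂μ ≠ ∞) : ∀ᵐ x ∂μ, f x ≠ ∞ :=
  (ae_lt_top (hf.pow_const r) hfr).mono fun x hx hfx => by
    simp [hfx, ENNReal.top_rpow_of_pos hr] at hx

lemma exists_measurable_ae_eq_toReal {f : α → ℝ} (hf : AEStronglyMeasurable f μ)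
    (hf0 : ∀ᵐ x ∂μ, 0 ≤ f x) :
    ∃ F : α → ℝ≥0∞, Measurable F ∧ (∀ x, F x ≠ ∞) ∧ f =ᵐ[μ] fun x => (F x).toReal := by
  refine ⟨fun x => ENNReal.ofReal (hf.mk f x), hf.stronglyMeasurable_mk.measurable.ennreal_ofReal,
    fun _ => ENNReal.ofReal_ne_top, ?_⟩
  filter_upwards [hf.ae_eq_mk, hf0] with x hx hx0
  rw [ENNReal.toReal_ofReal (hx ▸ hx0), hx]

end Auxiliary

section Truncation

variable {α : Type*} [MeasurableSpace α] (μ : Measure α) [SigmaFinite μ]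

def spanningTrunc (h : α → ℝ≥0∞) (n : ℕ) (x : α) : ℝ≥0∞ :=
  min (h x) ((spanningSets μ n).indicator (fun _ => (n : ℝ≥0∞)) x)

variable {μ} {h : α → ℝ≥0∞}

lemma measurable_spanningTrunc (hh : Measurable h) (n : ℕ) : Measurable (spanningTrunc μ h n) :=
  hh.min (measurable_const.indicator (measurableSet_spanningSets μ n))

lemma spanningTrunc_le_self (n : ℕ) (x : α) : spanningTrunc μ h n x ≤ h x :=
  min_le_left _ _

lemma spanningTrunc_le_natCast (n : ℕ) (x : α) : spanningTrunc μ h n x ≤ n :=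
  (min_le_right _ _).trans (Set.indicator_le_self' (fun _ _ => zero_le) x)

lemma monotone_spanningTrunc : Monotone (spanningTrunc μ h) := fun m n hmn x =>
  min_le_min le_rfl <| (Set.indicator_le_indicator_of_subset
    (monotone_spanningSets μ hmn) (fun _ => zero_le) x).trans
    (Set.indicator_le_indicator (by exact_mod_cast hmn))

lemma iSup_spanningTrunc (x : α) : ⨆ n, spanningTrunc μ h n x = h x := by
  refine le_antisymm (iSup_le fun n => spanningTrunc_le_self n x) ?_
  calc h x = ⨆ m : ℕ, min (h x) m := by
        rw [← inf_iSup_eq, ENNReal.iSup_natCast, inf_top_eq]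
    _ ≤ ⨆ n, spanningTrunc μ h n x := by
        refine iSup_le fun m => le_iSup_of_le (max m (spanningSetsIndex μ x)) ?_
        rw [spanningTrunc, Set.indicator_of_mem
          (mem_spanningSets_of_index_le μ x (le_max_right _ _))]
        exact min_le_min le_rfl (by exact_mod_cast le_max_left _ _)

lemma lintegral_spanningTrunc_rpow_ne_top {r : ℝ} (hr : 0 < r) (n : ℕ) :
    ∫⁻ x, spanningTrunc μ h n x ^ r ∂μ ≠ ∞ := by
  have hle : ∀ x, spanningTrunc μ h n x ^ r
      ≤ (spanningSets μ n).indicator (fun _ => (n : ℝ≥0∞) ^ r) x := fun x => by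
    by_cases hx : x ∈ spanningSets μ n
    · simpa [hx] using ENNReal.rpow_le_rpow (spanningTrunc_le_natCast n x) hr.le
    · simp [spanningTrunc, hx, ENNReal.zero_rpow_of_pos hr]
  refine ne_top_of_le_ne_top ?_ (lintegral_mono hle)
  rw [lintegral_indicator_const (measurableSet_spanningSets μ n)]
  exact ENNReal.mul_ne_top (ENNReal.rpow_ne_top_of_nonneg hr.le (ENNReal.natCast_ne_top n))
    (measure_spanningSets_lt_top μ n).ne

end Truncation

section Holder

variable {α : Type*} [MeasurableSpace α] {μ : Measure α}

lemma lintegral_rpow_rpow_iSup {u : ℕ → α → ℝ≥0∞} (hu : ∀ n, Measurable (u n))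
    (hmono : Monotone u) {r : ℝ} (hr : 0 < r) :
    (∫⁻ x, (⨆ n, u n x) ^ r ∂μ) ^ (1 / r) = ⨆ n, (∫⁻ x, u n x ^ r ∂μ) ^ (1 / r) := by
  have hpow : ∀ x, (⨆ n, u n x) ^ r = ⨆ n, u n x ^ r :=
    fun x => (ENNReal.orderIsoRpow r hr).map_iSup _
  simp_rw [hpow]
  rw [lintegral_iSup (fun n => (hu n).pow_const r)
    (fun m n hmn x => ENNReal.rpow_le_rpow (hmono hmn x) hr.le)]
  exact (ENNReal.orderIsoRpow (1 / r) (one_div_pos.2 hr)).map_iSup _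

lemma ENNReal.rpow_le_of_le_mul_rpow {p p' : ℝ} (hpp' : p.HolderConjugate p') {a M : ℝ≥0∞}
    (ha : a ≠ ∞) (h : a ≤ M * a ^ (1 / p)) : a ^ (1 / p') ≤ M := by
  rcases eq_or_ne a 0 with rfl | ha0
  · simp [ENNReal.zero_rpow_of_pos hpp'.symm.inv_pos]
  have hsplit : a ^ (1 / p') * a ^ (1 / p) = a := by
    rw [← ENNReal.rpow_add _ _ ha0 ha, add_comm, hpp'.one_div_add_one_div, div_one,
      ENNReal.rpow_one]
  refine (ENNReal.mul_le_mul_iff_left ?_ ?_).1 (hsplit.trans_le h)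
  · exact (ENNReal.rpow_pos (pos_iff_ne_zero.2 ha0) ha).ne'
  · exact ENNReal.rpow_ne_top_of_nonneg hpp'.one_div_nonneg ha

theorem lintegral_rpow_le_of_forall_lintegral_mul_le [SigmaFinite μ] {p p' : ℝ}
    (hpp' : p.HolderConjugate p') {h : α → ℝ≥0∞} (hh : Measurable h) {M : ℝ≥0∞}
    (hM : ∀ φ : α → ℝ≥0∞, Measurable φ → ∫⁻ x, φ x ^ p ∂μ ≠ ∞ →
      ∫⁻ x, φ x * h x ∂μ ≤ M * (∫⁻ x, φ x ^ p ∂μ) ^ (1 / p)) :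
    (∫⁻ x, h x ^ p' ∂μ) ^ (1 / p') ≤ M := by
  have hp' : 0 < p' := hpp'.symm.pos
  simp_rw [← iSup_spanningTrunc (μ := μ) (h := h)]
  rw [lintegral_rpow_rpow_iSup (measurable_spanningTrunc hh) monotone_spanningTrunc hp']
  refine iSup_le fun n =>
    ENNReal.rpow_le_of_le_mul_rpow hpp' (lintegral_spanningTrunc_rpow_ne_top hp' n) ?_
  set t := spanningTrunc μ h n
  -- test against `t ^ (p' - 1)`, whose `p`-th power is `t ^ p'`
  have hpow : ∀ x, (t x ^ (p' - 1)) ^ p = t x ^ p' := fun x => by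
    rw [← ENNReal.rpow_mul, hpp'.symm.sub_one_mul_conj]
  have hφ := hM (fun x => t x ^ (p' - 1)) ((measurable_spanningTrunc hh n).pow_const _)
    (by simpa only [hpow] using lintegral_spanningTrunc_rpow_ne_top hp' n)
  simp only [hpow] at hφ
  refine le_trans (lintegral_mono fun x => ?_) hφ
  calc t x ^ p' = t x ^ (p' - 1) * t x := by
        rw [mul_comm, ENNReal.mul_rpow_sub_one hpp'.symm.lt.le]
    _ ≤ t x ^ (p' - 1) * h x := by gcongr; exact spanningTrunc_le_self n x

theorem ae_rpow_eq_of_lintegral_mul_eq_one {p p' : ℝ} (hpp' : p.HolderConjugate p')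
    {f g : α → ℝ≥0∞} (hf : Measurable f) (hg : Measurable g) (hf1 : ∫⁻ x, f x ^ p ∂μ = 1)
    (hg1 : ∫⁻ x, g x ^ p' ∂μ = 1) (hfg : ∫⁻ x, f x * g x ∂μ = 1) :
    ∀ᵐ x ∂μ, f x ^ p = g x ^ p' := by
  set w : α → ℝ≥0∞ := fun x => f x ^ p / ENNReal.ofReal p + g x ^ p' / ENNReal.ofReal p'
  have hwm : Measurable w :=
    ((hf.pow_const p).div_const _).add ((hg.pow_const p').div_const _)
  have hw : ∫⁻ x, w x ∂μ = 1 := by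
    simp only [w, div_eq_mul_inv]
    rw [lintegral_add_left ((hf.pow_const p).mul_const _), lintegral_mul_const _ (hf.pow_const p),
      lintegral_mul_const _ (hg.pow_const p'), hf1, hg1, one_mul, one_mul,
      ← ENNReal.ofReal_inv_of_pos hpp'.pos, ← ENNReal.ofReal_inv_of_pos hpp'.symm.pos,
      ← ENNReal.ofReal_add hpp'.inv_nonneg hpp'.symm.inv_nonneg, hpp'.inv_add_inv_eq_one,
      ENNReal.ofReal_one]
  -- Young's inequality `f g ≤ w` holds everywhere and both sides have integral `1`
  have hyoung : (fun x => f x * g x) =ᵐ[μ] w :=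
    ae_eq_of_ae_le_of_lintegral_le (ae_of_all _ fun x => ENNReal.young_inequality _ _ hpp')
      (by simp [hfg]) hwm.aemeasurable (by rw [hw, hfg])
  filter_upwards [hyoung, ae_rpow_ne_top hf hpp'.pos (by simp [hf1]),
    ae_rpow_ne_top hg hpp'.symm.pos (by simp [hg1])] with x hx hfx hgx
  rcases (ENNReal.young_inequality_eq_iff _ _ hpp').1 hx with ⟨hf_top, -⟩ | ⟨-, hg_top⟩ | h
  · exact absurd hf_top hfx
  · exact absurd hg_top hgx
  · exact h

theorem ae_eq_mul_rpow_of_lintegral_mul_eq {p p' : ℝ} (hpp' : p.HolderConjugate p')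
    {f h : α → ℝ≥0∞} (hf : Measurable f) (hh : Measurable h) (hf1 : ∫⁻ x, f x ^ p ∂μ = 1)
    {c : ℝ≥0∞} (hc0 : c ≠ 0) (hc : c ≠ ∞) (hh_le : (∫⁻ x, h x ^ p' ∂μ) ^ (1 / p') ≤ c)
    (hfh : ∫⁻ x, f x * h x ∂μ = c) :
    ∀ᵐ x ∂μ, h x = c * f x ^ (p - 1) := by
  have hp' : 0 < p' := hpp'.symm.pos
  have hh_eq : (∫⁻ x, h x ^ p' ∂μ) ^ (1 / p') = c := by
    refine le_antisymm hh_le ?_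
    have := ENNReal.lintegral_mul_le_Lp_mul_Lq μ hpp' hf.aemeasurable hh.aemeasurable
    rwa [hf1, ENNReal.one_rpow, one_mul, Pi.mul_def, hfh] at this
  have hh_int : ∫⁻ x, h x ^ p' ∂μ = c ^ p' := by
    rw [← hh_eq, one_div, ENNReal.rpow_inv_rpow hp'.ne']
  have hk1 : ∫⁻ x, (c⁻¹ * h x) ^ p' ∂μ = 1 := by
    simp_rw [ENNReal.mul_rpow_of_nonneg _ _ hp'.le]
    rw [lintegral_const_mul _ (hh.pow_const p'), hh_int, ENNReal.inv_rpow,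
      ENNReal.inv_mul_cancel (ENNReal.rpow_pos (pos_iff_ne_zero.2 hc0) hc).ne'
        (ENNReal.rpow_ne_top_of_nonneg hp'.le hc)]
  have hfk : ∫⁻ x, f x * (c⁻¹ * h x) ∂μ = 1 := by
    simp_rw [mul_left_comm (f _)]
    rw [lintegral_const_mul _ (by fun_prop), hfh, ENNReal.inv_mul_cancel hc0 hc]
  filter_upwards [ae_rpow_eq_of_lintegral_mul_eq_one hpp' hf (hh.const_mul _) hf1 hk1 hfk]
    with x hx
  have hk : c⁻¹ * h x = f x ^ (p - 1) := by
    rw [← ENNReal.rpow_rpow_inv hp'.ne' (c⁻¹ * h x), ← hx, ← ENNReal.rpow_mul, ← div_eq_mul_inv,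
      hpp'.div_conj_eq_sub_one]
  rw [← hk, ← mul_assoc, ENNReal.mul_inv_cancel hc0 hc, one_mul]

end Holder

section GroupConvolution

variable {G : Type*} [MeasurableSpace G] [AddGroup G]

/-- `convOp` on `ℝ≥0∞`-valued functions, as a lower integral: unlike the Bochner integral it has
no junk value `0` where `y ↦ F (x - y)` fails to be integrable. -/
def lconvOp (σ : Measure G) (F : G → ℝ≥0∞) (x : G) : ℝ≥0∞ := ∫⁻ y, F (x - y) ∂σ

def ladjOp (σ : Measure G) (F : G → ℝ≥0∞) (x : G) : ℝ≥0∞ := ∫⁻ y, F (x + y) ∂σ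

variable [MeasurableAdd₂ G] (σ : Measure G) [SFinite σ]

lemma measurable_ladjOp {F : G → ℝ≥0∞} (hF : Measurable F) : Measurable (ladjOp σ F) :=
  (hF.comp measurable_add).lintegral_prod_right'

variable {μ : Measure G} [SFinite μ] [μ.IsAddRightInvariant]

lemma ae_ae_add_of_ae {P : G → Prop} (h : ∀ᵐ z ∂μ, P z) : ∀ᵐ x ∂μ, ∀ᵐ y ∂σ, P (x + y) :=
  Measure.ae_ae_of_ae_prod <| (QuasiMeasurePreserving.prod_of_left measurable_add <|
    ae_of_all _ fun y => (measurePreserving_add_right μ y).quasiMeasurePreserving).ae h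

variable [MeasurableNeg G]

lemma measurable_lconvOp {F : G → ℝ≥0∞} (hF : Measurable F) : Measurable (lconvOp σ F) :=
  (hF.comp measurable_sub).lintegral_prod_right'

lemma ae_ae_sub_of_ae {P : G → Prop} (h : ∀ᵐ z ∂μ, P z) : ∀ᵐ x ∂μ, ∀ᵐ y ∂σ, P (x - y) :=
  Measure.ae_ae_of_ae_prod ((quasiMeasurePreserving_sub_of_right_invariant μ σ).ae h)

lemma lintegral_lconvOp {F : G → ℝ≥0∞} (hF : Measurable F) :
    ∫⁻ x, lconvOp σ F x ∂μ = σ Set.univ * ∫⁻ x, F x ∂μ := by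
  simp only [lconvOp]
  rw [lintegral_lintegral_swap (f := fun x y => F (x - y)) (hF.comp measurable_sub).aemeasurable]
  simp_rw [lintegral_sub_right_eq_self F, lintegral_const, mul_comm]

lemma lintegral_lconvOp_mul {F H : G → ℝ≥0∞} (hF : Measurable F) (hH : Measurable H) :
    ∫⁻ x, lconvOp σ F x * H x ∂μ = ∫⁻ x, F x * ladjOp σ H x ∂μ := by
  calc ∫⁻ x, lconvOp σ F x * H x ∂μ = ∫⁻ x, ∫⁻ y, F (x - y) * H x ∂σ ∂μ := by
        refine lintegral_congr fun x => ?_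
        exact (lintegral_mul_const _ (hF.comp (measurable_const.sub measurable_id))).symm
    _ = ∫⁻ y, ∫⁻ x, F (x - y) * H x ∂μ ∂σ :=
        lintegral_lintegral_swap (f := fun x y => F (x - y) * H x)
          ((hF.comp measurable_sub).mul (hH.comp measurable_fst)).aemeasurable
    _ = ∫⁻ y, ∫⁻ x, F x * H (x + y) ∂μ ∂σ := by
        congr 1 with y
        rw [← lintegral_add_right_eq_self (fun x => F (x - y) * H x) y]
        simp
    _ = ∫⁻ x, ∫⁻ y, F x * H (x + y) ∂σ ∂μ :=
        (lintegral_lintegral_swap (f := fun x y => F x * H (x + y))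
          ((hF.comp measurable_fst).mul (hH.comp measurable_add)).aemeasurable).symm
    _ = ∫⁻ x, F x * ladjOp σ H x ∂μ := by
        simp_rw [ladjOp]
        exact lintegral_congr fun x => lintegral_const_mul _ (hH.comp (measurable_const_add x))

lemma lintegral_lconvOp_rpow_ne_zero [NeZero σ] {F : G → ℝ≥0∞} (hF : Measurable F) {p q : ℝ}
    (hp : 0 < p) (hq : 0 < q) (hFp : ∫⁻ x, F x ^ p ∂μ ≠ 0) : ∫⁻ x, lconvOp σ F x ^ q ∂μ ≠ 0 := by
  rw [Ne, lintegral_rpow_eq_zero_iff hF hp, ← lintegral_eq_zero_iff hF] at hFp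
  rw [Ne, lintegral_rpow_eq_zero_iff (measurable_lconvOp σ hF) hq]
  intro hTF
  have hint := lintegral_lconvOp σ (μ := μ) hF
  rw [lintegral_congr_ae hTF] at hint
  simp only [Pi.zero_apply, lintegral_zero] at hint
  exact hFp ((mul_eq_zero_iff_left (Measure.measure_univ_ne_zero.2 (NeZero.ne σ))).1 hint.symm)

lemma lintegral_mul_ladjOp_le {p q q' : ℝ} (hqq' : q.HolderConjugate q') {Λ : ℝ≥0∞}
    {φ H : G → ℝ≥0∞} (hφ : Measurable φ) (hH : Measurable H)
    (hφΛ : (∫⁻ x, lconvOp σ φ x ^ q ∂μ) ^ (1 / q) ≤ Λ * (∫⁻ x, φ x ^ p ∂μ) ^ (1 / p)) :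
    ∫⁻ x, φ x * ladjOp σ H x ∂μ
      ≤ Λ * (∫⁻ x, φ x ^ p ∂μ) ^ (1 / p) * (∫⁻ x, H x ^ q' ∂μ) ^ (1 / q') := by
  rw [← lintegral_lconvOp_mul σ hφ hH]
  exact (ENNReal.lintegral_mul_le_Lp_mul_Lq μ hqq' (measurable_lconvOp σ hφ).aemeasurable
    hH.aemeasurable).trans (by gcongr)

end GroupConvolution

section EulerLagrange

variable {G : Type*} [MeasurableSpace G] [AddGroup G] [MeasurableAdd₂ G] [MeasurableNeg G]
  (σ : Measure G) [SFinite σ] {μ : Measure G} [SigmaFinite μ] [μ.IsAddRightInvariant]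

theorem ladjOp_rpow_lconvOp_ae_eq {p q : ℝ} (hp : 1 < p) (hq : 1 < q) {Λ : ℝ≥0∞}
    (hΛ0 : Λ ≠ 0) (hΛ : Λ ≠ ∞)
    (hbound : ∀ φ : G → ℝ≥0∞, Measurable φ → ∫⁻ x, φ x ^ p ∂μ ≠ ∞ →
      (∫⁻ x, lconvOp σ φ x ^ q ∂μ) ^ (1 / q) ≤ Λ * (∫⁻ x, φ x ^ p ∂μ) ^ (1 / p))
    {F : G → ℝ≥0∞} (hF : Measurable F) (hF1 : ∫⁻ x, F x ^ p ∂μ = 1)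
    (hTF : ∫⁻ x, lconvOp σ F x ^ q ∂μ = Λ ^ q) :
    ∀ᵐ x ∂μ, ladjOp σ (fun y => lconvOp σ F y ^ (q - 1)) x = Λ ^ q * F x ^ (p - 1) := by
  have hpp' := Real.HolderConjugate.conjExponent hp
  have hqq' := Real.HolderConjugate.conjExponent hq
  set g : G → ℝ≥0∞ := fun y => lconvOp σ F y ^ (q - 1)
  have hg : Measurable g := (measurable_lconvOp σ hF).pow_const _
  have hg_norm : (∫⁻ x, g x ^ q.conjExponent ∂μ) ^ (1 / q.conjExponent) = Λ ^ (q - 1) := by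
    simp_rw [g, ← ENNReal.rpow_mul, hqq'.sub_one_mul_conj, hTF, ← ENNReal.rpow_mul, mul_one_div,
      hqq'.div_conj_eq_sub_one]
  -- `‖T^* g‖_{p'} ≤ Λ ‖g‖_{q'} = Λ ^ q`, by duality and the converse of Hölder's inequality
  have hTg : (∫⁻ x, ladjOp σ g x ^ p.conjExponent ∂μ) ^ (1 / p.conjExponent) ≤ Λ ^ q := by
    refine lintegral_rpow_le_of_forall_lintegral_mul_le hpp' (measurable_ladjOp σ hg)
      fun φ hφ hφp => (lintegral_mul_ladjOp_le σ hqq' hφ hg (hbound φ hφ hφp)).trans_eq ?_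
    rw [hg_norm, mul_right_comm, ENNReal.mul_rpow_sub_one hq.le]
  have hFTg : ∫⁻ x, F x * ladjOp σ g x ∂μ = Λ ^ q := by
    simp_rw [← lintegral_lconvOp_mul σ hF hg, g, ENNReal.mul_rpow_sub_one hq.le, hTF]
  exact ae_eq_mul_rpow_of_lintegral_mul_eq hpp' hF (measurable_ladjOp σ hg) hF1
    (ENNReal.rpow_pos (pos_iff_ne_zero.2 hΛ0) hΛ).ne'
    (ENNReal.rpow_ne_top_of_nonneg (by positivity) hΛ) hTg hFTg

end EulerLagrange

section Euclidean

variable {d : ℕ} (σ : Measure (Euc d))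

section SFinite

variable [SFinite σ] {E : Type*} [NormedAddCommGroup E] [NormedSpace ℝ E]

lemma convOp_ae_congr {f g : Euc d → E} (h : f =ᵐ[volume] g) :
    convOp σ f =ᵐ[volume] convOp σ g :=
  (ae_ae_sub_of_ae σ h).mono fun _ hx => integral_congr_ae hx

lemma adjOp_ae_congr {f g : Euc d → E} (h : f =ᵐ[volume] g) :
    adjOp σ f =ᵐ[volume] adjOp σ g :=
  (ae_ae_add_of_ae σ h).mono fun _ hx => integral_congr_ae hx

lemma convOp_toReal_ae_eq {F : Euc d → ℝ≥0∞} (hF : Measurable F)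
    (hF_fin : ∀ᵐ y ∂volume, F y ≠ ∞) :
    convOp σ (fun y => (F y).toReal) =ᵐ[volume] fun x => (lconvOp σ F x).toReal :=
  (ae_ae_sub_of_ae σ hF_fin).mono fun _ hx =>
    integral_toReal (hF.comp (measurable_const.sub measurable_id)).aemeasurable
      (hx.mono fun _ hy => lt_top_iff_ne_top.2 hy)

lemma adjOp_toReal_ae_eq {F : Euc d → ℝ≥0∞} (hF : Measurable F)
    (hF_fin : ∀ᵐ y ∂volume, F y ≠ ∞) :
    adjOp σ (fun y => (F y).toReal) =ᵐ[volume] fun x => (ladjOp σ F x).toReal :=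
  (ae_ae_add_of_ae σ hF_fin).mono fun _ hx =>
    integral_toReal (hF.comp (measurable_const.add measurable_id)).aemeasurable
      (hx.mono fun _ hy => lt_top_iff_ne_top.2 hy)

lemma eLpNorm_convOp_le {p q : ℝ≥0∞} (hp : p ≠ 0) {f : Euc d → E} (hf : MemLp f p volume) :
    eLpNorm (convOp σ f) q volume ≤ opNorm (convOp (F := E) σ) p q * eLpNorm f p volume := by
  by_cases hf0 : eLpNorm f p volume = 0
  · have hTf : convOp σ f =ᵐ[volume] 0 :=
      (convOp_ae_congr σ ((eLpNorm_eq_zero_iff hf.1 hp).1 hf0)).trans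
        (ae_of_all _ fun x => by simp [convOp])
    simp [eLpNorm_congr_ae hTf]
  · rw [← ENNReal.div_le_iff hf0 hf.eLpNorm_ne_top]
    exact le_iSup₂_of_le (f := fun f (_ : MemLp f p volume) => ⨆ (_ : eLpNorm f p volume ≠ 0),
      eLpNorm (convOp σ f) q volume / eLpNorm f p volume) f hf (le_iSup_of_le hf0 le_rfl)

lemma adjOp_rpow_ae_eq {g : Euc d → ℝ} {F : Euc d → ℝ≥0∞} (hF : Measurable F)
    (hF_fin : ∀ᵐ y ∂volume, F y ≠ ∞) (hgF : g =ᵐ[volume] fun y => (F y).toReal) {r : ℝ}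
    (hr : 0 ≤ r) :
    adjOp σ (fun y => g y ^ r) =ᵐ[volume] fun x => (ladjOp σ (fun y => F y ^ r) x).toReal := by
  refine (adjOp_ae_congr σ (hgF.mono fun x hx => ?_)).trans
    (adjOp_toReal_ae_eq σ (hF.pow_const r) (hF_fin.mono fun y hy => ?_))
  · simp [hx, ENNReal.toReal_rpow]
  · exact ENNReal.rpow_ne_top_of_nonneg hr hy

end SFinite

variable [IsFiniteMeasure σ] {p q : ℝ}

lemma lintegral_lconvOp_rpow_le_of_le (hp : 0 < p) (hq : 0 < q) {F : Euc d → ℝ≥0∞}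
    (hF : Measurable F) {C : ℝ≥0∞} (hC : C ≠ ∞) (hFC : ∀ x, F x ≤ C)
    (hFp : ∫⁻ x, F x ^ p ≠ ∞) :
    (∫⁻ x, lconvOp σ F x ^ q) ^ (1 / q)
      ≤ opNorm (convOp (F := ℂ) σ) (ENNReal.ofReal p) (ENNReal.ofReal q)
        * (∫⁻ x, F x ^ p) ^ (1 / p) := by
  have hF_fin : ∀ x, F x ≠ ∞ := fun x => ne_top_of_le_ne_top hC (hFC x)
  have hTF_fin : ∀ x, lconvOp σ F x ≠ ∞ := fun x =>
    ne_top_of_le_ne_top (ENNReal.mul_ne_top hC (measure_ne_top σ Set.univ))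
      ((lintegral_mono fun y => hFC (x - y)).trans_eq (lintegral_const C))
  set f : Euc d → ℂ := fun x => ((F x).toReal : ℂ) with hf_def
  have hf_norm : eLpNorm f (ENNReal.ofReal p) volume = (∫⁻ x, F x ^ p) ^ (1 / p) := by
    rw [← eLpNorm_toReal (ae_of_all _ hF_fin) hp]
    exact eLpNorm_congr_norm_ae (ae_of_all _ fun x => Complex.norm_real _)
  have hf : MemLp f (ENNReal.ofReal p) volume :=
    ⟨(Complex.measurable_ofReal.comp hF.ennreal_toReal).aestronglyMeasurable,
      hf_norm ▸ ENNReal.rpow_lt_top_of_nonneg (by positivity) hFp⟩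
  have hTf : convOp σ f =ᵐ[volume] fun x => ((lconvOp σ F x).toReal : ℂ) :=
    (convOp_toReal_ae_eq σ hF (ae_of_all _ hF_fin)).mono fun x hx => by
      simp only [convOp, hf_def] at hx ⊢
      rw [integral_complex_ofReal, hx]
  calc (∫⁻ x, lconvOp σ F x ^ q) ^ (1 / q) = eLpNorm (convOp σ f) (ENNReal.ofReal q) volume := by
        rw [eLpNorm_congr_ae hTf, ← eLpNorm_toReal (ae_of_all _ hTF_fin) hq]
        exact eLpNorm_congr_norm_ae (ae_of_all _ fun x => (Complex.norm_real _).symm)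
    _ ≤ _ := eLpNorm_convOp_le σ (by simpa using hp) hf
    _ = _ := by rw [hf_norm]

lemma lintegral_lconvOp_rpow_le (hp : 0 < p) (hq : 0 < q) {F : Euc d → ℝ≥0∞}
    (hF : Measurable F) :
    (∫⁻ x, lconvOp σ F x ^ q) ^ (1 / q)
      ≤ opNorm (convOp (F := ℂ) σ) (ENNReal.ofReal p) (ENNReal.ofReal q)
        * (∫⁻ x, F x ^ p) ^ (1 / p) := by
  set t := spanningTrunc (volume : Measure (Euc d)) F
  have ht : ∀ n, Measurable (t n) := measurable_spanningTrunc hF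
  have hTt : ∀ x, lconvOp σ F x = ⨆ n, lconvOp σ (t n) x := fun x => by
    simp_rw [lconvOp]
    rw [← lintegral_iSup (f := fun n y => t n (x - y))
      (fun n => (ht n).comp (measurable_const.sub measurable_id))
      fun m n hmn y => monotone_spanningTrunc hmn (x - y)]
    simp_rw [t, iSup_spanningTrunc]
  simp_rw [hTt]
  rw [lintegral_rpow_rpow_iSup (fun n => measurable_lconvOp σ (ht n))
    (fun m n hmn x => lintegral_mono fun y => monotone_spanningTrunc hmn (x - y)) hq]
  refine iSup_le fun n => (lintegral_lconvOp_rpow_le_of_le σ hp hq (ht n)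
    (ENNReal.natCast_ne_top n) (spanningTrunc_le_natCast n)
    (lintegral_spanningTrunc_rpow_ne_top hp n)).trans ?_
  gcongr with x
  exact spanningTrunc_le_self n x

lemma ae_lconvOp_ne_top (hp : 0 < p) (hq : 0 < q)
    (hΛ : opNorm (convOp (F := ℂ) σ) (ENNReal.ofReal p) (ENNReal.ofReal q) ≠ ∞)
    {F : Euc d → ℝ≥0∞} (hF : Measurable F) (hFp : ∫⁻ x, F x ^ p ≠ ∞) :
    ∀ᵐ x ∂volume, lconvOp σ F x ≠ ∞ :=
  ae_rpow_ne_top (measurable_lconvOp σ hF) hq <| ((ENNReal.rpow_lt_top_iff_of_pos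
    (one_div_pos.2 hq)).1 <| (lintegral_lconvOp_rpow_le σ hp hq hF).trans_lt <|
      ENNReal.mul_lt_top hΛ.lt_top (ENNReal.rpow_lt_top_of_nonneg (by positivity) hFp)).ne

end Euclidean

lemma Real.rpow_neg_div_mul_mul_rpow_sub_one_rpow {a t p q : ℝ} (ha : 0 < a) (ht : 0 ≤ t)
    (hp : 1 < p) :
    a ^ (-(q / (p - 1))) * (a ^ q * t ^ (p - 1)) ^ (1 / (p - 1)) = t := by
  have hp1 : p - 1 ≠ 0 := (sub_pos.2 hp).ne'
  rw [Real.mul_rpow (by positivity) (by positivity), ← Real.rpow_mul ha.le, ← Real.rpow_mul ht,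
    mul_one_div_cancel hp1, Real.rpow_one, ← mul_assoc, ← Real.rpow_add ha, mul_one_div,
    neg_add_cancel, Real.rpow_zero, one_mul]

theorem euler_lagrange_equation_general
    (d : ℕ)
    (σ : Measure (Euc d)) [IsProbabilityMeasure σ]
    (p q : ℝ) (hp : 1 < p) (hpq : p < q)
    (hvalid : opNorm (convOp (F := ℂ) σ) (ENNReal.ofReal p) (ENNReal.ofReal q) < ⊤)
    (f : Euc d → ℝ) (hfpos : ∀ x, 0 ≤ f x)
    (hf : MemLp f (ENNReal.ofReal p) volume)
    (hnorm : eLpNorm f (ENNReal.ofReal p) volume = 1)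
    (hext : eLpNorm (convOp σ f) (ENNReal.ofReal q) volume
      = opNorm (convOp (F := ℂ) σ) (ENNReal.ofReal p) (ENNReal.ofReal q)
        * eLpNorm f (ENNReal.ofReal p) volume) :
    ∀ᵐ x ∂(volume : Measure (Euc d)),
      f x = (opNorm (convOp (F := ℂ) σ) (ENNReal.ofReal p) (ENNReal.ofReal q)).toReal
              ^ (-(q / (p - 1)))
            * (adjOp σ (fun y => (convOp σ f y) ^ (q - 1)) x) ^ (1 / (p - 1)) := by
  set Λ := opNorm (convOp (F := ℂ) σ) (ENNReal.ofReal p) (ENNReal.ofReal q)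
  have hp0 : 0 < p := zero_lt_one.trans hp
  have hq : 1 < q := hp.trans hpq
  have hq0 : 0 < q := zero_lt_one.trans hq
  obtain ⟨F, hF, hF_fin, hfF⟩ :=
    exists_measurable_ae_eq_toReal hf.aestronglyMeasurable (ae_of_all _ hfpos)
  have hF1 : ∫⁻ x, F x ^ p = 1 := by
    rwa [eLpNorm_congr_ae hfF, eLpNorm_toReal_eq_iff (ae_of_all _ hF_fin) hp0,
      ENNReal.one_rpow] at hnorm
  have hTF_fin := ae_lconvOp_ne_top σ hp0 hq0 hvalid.ne hF (by simp [hF1])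
  have hTf : convOp σ f =ᵐ[volume] fun x => (lconvOp σ F x).toReal :=
    (convOp_ae_congr σ hfF).trans (convOp_toReal_ae_eq σ hF (ae_of_all _ hF_fin))
  have hTF : ∫⁻ x, lconvOp σ F x ^ q = Λ ^ q := by
    rwa [hnorm, mul_one, eLpNorm_congr_ae hTf, eLpNorm_toReal_eq_iff hTF_fin hq0] at hext
  have hΛ0 : Λ ≠ 0 := fun hΛ => lintegral_lconvOp_rpow_ne_zero σ (μ := volume) hF hp0 hq0
    (by simp [hF1]) (by rw [hTF, hΛ, ENNReal.zero_rpow_of_pos hq0])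
  have hEL := ladjOp_rpow_lconvOp_ae_eq σ hp hq hΛ0 hvalid.ne
    (fun φ hφ _ => lintegral_lconvOp_rpow_le σ hp0 hq0 hφ) hF hF1 hTF
  filter_upwards [hfF, hEL, adjOp_rpow_ae_eq σ (measurable_lconvOp σ hF) hTF_fin hTf
    (sub_nonneg.2 hq.le)] with x hfx hELx hT'Tfx
  rw [hT'Tfx, hELx, ENNReal.toReal_mul, ← ENNReal.toReal_rpow, ← ENNReal.toReal_rpow, ← hfx,
    Real.rpow_neg_div_mul_mul_rpow_sub_one_rpow (ENNReal.toReal_pos hΛ0 hvalid.ne) (hfpos x) hp]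

/-- The Euler–Lagrange equation for normalized nonnegative extremizers. -/
theorem euler_lagrange_equation
    (d : ℕ) (hd : 1 ≤ d)
    (σ : Measure (Euc d)) [IsProbabilityMeasure σ]
    (hcpt : ∃ K : Set (Euc d), IsCompact K ∧ σ Kᶜ = 0)
    (p q : ℝ) (hp : 1 < p) (hpq : p < q)
    (hvalid : opNorm (convOp (F := ℂ) σ) (ENNReal.ofReal p) (ENNReal.ofReal q) < ⊤)
    (f : Euc d → ℝ) (hfpos : ∀ x, 0 ≤ f x)
    (hf : MemLp f (ENNReal.ofReal p) volume)
    (hnorm : eLpNorm f (ENNReal.ofReal p) volume = 1)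
    (hext : eLpNorm (convOp σ f) (ENNReal.ofReal q) volume
      = opNorm (convOp (F := ℂ) σ) (ENNReal.ofReal p) (ENNReal.ofReal q)
        * eLpNorm f (ENNReal.ofReal p) volume) :
    ∀ᵐ x ∂(volume : Measure (Euc d)),
      f x = (opNorm (convOp (F := ℂ) σ) (ENNReal.ofReal p) (ENNReal.ofReal q)).toReal
              ^ (-(q / (p - 1)))
            * (adjOp σ (fun y => (convOp σ f y) ^ (q - 1)) x) ^ (1 / (p - 1)) :=
  euler_lagrange_equation_general d σ p q hp hpq hvalid f hfpos hf hnorm hext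
end
end
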